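/- Let X be an extended quasi-metric space. For x ∈ X let ε_x ∈ MH^0_0(X) be the class of the cochain δ_x taking value 1 on the 0-simplex (x) and 0 on all other 0-simplices. Then the map x ↦ ε_x is a bijection from X onto the set of primitive idempotents of the ring MH^0_0(X); and for any x, y ∈ X and ℓ ∈ (0,∞), the subgroup ε_x · MH^1_ℓ(X) · ε_y of MH^1_ℓ(X) is nonzero if and only if x and y are adjacent with d(x,y) = ℓ. -/

import Mathlib

/-! Core definitions: magnitude (co)homology of generalised metric spaces. -/

open scoped ENNReal NNReal Classical
noncomputable section

/-- A generalised metric space (extended pseudo-quasi-metric space):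
a set with a distance in `[0,∞]` satisfying `d x x = 0` and the triangle
inequality, but not necessarily symmetry or separation. -/
structure GMS (X : Type*) where
  d : X → X → ℝ≥0∞
  d_self : ∀ x, d x x = 0
  d_triangle : ∀ x y z, d x z ≤ d x y + d y z

variable {X : Type*}

/-- An extended quasi-metric space: distinct points are at nonzero distance. -/
def GMS.Quasi (M : GMS X) : Prop := ∀ x y, M.d x y = 0 → x = y

/-- Consecutive entries of the tuple are distinct, i.e. it is a simplex. -/
def SepTuple {k : ℕ} (x : Fin (k + 1) → X) : Prop :=
  ∀ i : Fin k, x i.castSucc ≠ x i.succ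

/-- The length of a tuple: the sum of consecutive distances. -/
def GMS.len (M : GMS X) {k : ℕ} (x : Fin (k + 1) → X) : ℝ≥0∞ :=
  ∑ i : Fin k, M.d (x i.castSucc) (x i.succ)

/-- A `k`-simplex of length `ℓ` in the generalised metric space `M`. -/
structure MSimplex (M : GMS X) (k : ℕ) (ℓ : ℝ≥0) where
  pts : Fin (k + 1) → X
  sep : SepTuple pts
  len_eq : M.len pts = (ℓ : ℝ≥0∞)

/-- The magnitude chain group `MC_{k,ℓ}`: the free abelian group on the
`k`-simplices of length `ℓ`. -/
abbrev MC (M : GMS X) (k : ℕ) (ℓ : ℝ≥0) := MSimplex M k ℓ →₀ ℤ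

/-- The magnitude cochain group `MC^k_ℓ = Hom(MC_{k,ℓ}, ℤ)`, identified with
the group of all `ℤ`-valued functions on `k`-simplices of length `ℓ`. -/
abbrev MCo (M : GMS X) (k : ℕ) (ℓ : ℝ≥0) := MSimplex M k ℓ → ℤ

/-- Remove the `(j+1)`-st point (an inner point) from a tuple. -/
def faceTuple {k : ℕ} (x : Fin (k + 2) → X) (j : Fin k) : Fin (k + 1) → X :=
  x ∘ Fin.succAbove ⟨j.val + 1, by have := j.isLt; omega⟩

/-- The condition under which the inner face `∂_{j+1}` of a simplex is a simplex
of the same length: the removed point lies on a geodesic between its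
neighbours (and, redundantly in quasi-metric spaces, the face is again a
simplex of the same length). -/
def GMS.FaceOK (M : GMS X) {k : ℕ} {ℓ : ℝ≥0} (s : MSimplex M (k + 1) ℓ) (j : Fin k) : Prop :=
  M.d (s.pts ⟨j.val, by have := j.isLt; omega⟩) (s.pts ⟨j.val + 2, by have := j.isLt; omega⟩) =
      M.d (s.pts ⟨j.val, by have := j.isLt; omega⟩) (s.pts ⟨j.val + 1, by have := j.isLt; omega⟩) +
      M.d (s.pts ⟨j.val + 1, by have := j.isLt; omega⟩) (s.pts ⟨j.val + 2, by have := j.isLt; omega⟩)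
    ∧ SepTuple (faceTuple s.pts j) ∧ M.len (faceTuple s.pts j) = (ℓ : ℝ≥0∞)

/-- The inner face `∂_{j+1}` of a simplex, when defined. -/
def GMS.face (M : GMS X) {k : ℕ} {ℓ : ℝ≥0} (s : MSimplex M (k + 1) ℓ) (j : Fin k)
    (h : M.FaceOK s j) : MSimplex M k ℓ :=
  ⟨faceTuple s.pts j, h.2.1, h.2.2⟩

/-- The magnitude coboundary `∂^* : MC^k_ℓ → MC^{k+1}_ℓ`, dual to the
differential `∂ = -∂_1 + ∂_2 - ⋯ + (-1)^k ∂_k`. -/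
def MCoDelta (M : GMS X) (k : ℕ) (ℓ : ℝ≥0) : MCo M k ℓ →ₗ[ℤ] MCo M (k + 1) ℓ where
  toFun φ := fun s => ∑ j : Fin k, (-1 : ℤ) ^ (j.val + 1) *
      (if h : M.FaceOK s j then φ (M.face s j h) else 0)
  map_add' φ ψ := by
    funext s
    simp only [Pi.add_apply]
    rw [← Finset.sum_add_distrib]
    refine Finset.sum_congr rfl fun j _ => ?_
    split <;> ring
  map_smul' z φ := by
    funext s
    simp only [Pi.smul_apply, smul_eq_mul, RingHom.id_apply]
    rw [Finset.mul_sum]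
    refine Finset.sum_congr rfl fun j _ => ?_
    split <;> ring

/-- Magnitude cocycles in bidegree `(k, ℓ)`. -/
def MCocycle (M : GMS X) (k : ℕ) (ℓ : ℝ≥0) : Submodule ℤ (MCo M k ℓ) :=
  LinearMap.ker (MCoDelta M k ℓ)

/-- Magnitude coboundaries in bidegree `(k, ℓ)` (zero in degree `0`). -/
def MCobound (M : GMS X) : (k : ℕ) → (ℓ : ℝ≥0) → Submodule ℤ (MCo M k ℓ)
  | 0, _ => ⊥
  | (k + 1), ℓ => LinearMap.range (MCoDelta M k ℓ)

/-- The magnitude cohomology group `MH^k_ℓ(X)`: cocycles modulo coboundaries. -/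
abbrev MagCohomology (M : GMS X) (k : ℕ) (ℓ : ℝ≥0) :=
  MCocycle M k ℓ ⧸ (MCobound M k ℓ).comap (MCocycle M k ℓ).subtype

/-- The cohomology class of a cochain (zero if it is not a cocycle). -/
def cohClass (M : GMS X) {k : ℕ} {ℓ : ℝ≥0} (φ : MCo M k ℓ) : MagCohomology M k ℓ :=
  if h : φ ∈ MCocycle M k ℓ then Submodule.Quotient.mk ⟨φ, h⟩ else 0

/-- A representative cocycle of a magnitude cohomology class. -/
def MHout (M : GMS X) {k : ℕ} {ℓ : ℝ≥0} (α : MagCohomology M k ℓ) : MCo M k ℓ :=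
  ((Submodule.Quotient.mk_surjective _) α).choose.val

/-- The first `j+1` points of a `(j+k)`-simplex. -/
def frontT (j k : ℕ) (x : Fin (j + k + 1) → X) : Fin (j + 1) → X :=
  fun i => x ⟨i.val, by have := i.isLt; omega⟩

/-- The last `k+1` points of a `(j+k)`-simplex. -/
def backT (j k : ℕ) (x : Fin (j + k + 1) → X) : Fin (k + 1) → X :=
  fun i => x ⟨j + i.val, by have := i.isLt; omega⟩

lemma SepTuple.front {j k : ℕ} {x : Fin (j + k + 1) → X} (h : SepTuple x) :
    SepTuple (frontT j k x) := by
  intro i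
  have hi := i.isLt
  exact h ⟨i.val, by omega⟩

lemma SepTuple.back {j k : ℕ} {x : Fin (j + k + 1) → X} (h : SepTuple x) :
    SepTuple (backT j k x) := by
  intro i
  have hi := i.isLt
  exact h ⟨j + i.val, by omega⟩

/-- The product of magnitude cochains:
`(φ·ψ)(x_0,…,x_{j+k}) = φ(x_0,…,x_j) · ψ(x_j,…,x_{j+k})`,
where a cochain of length-degree `ℓ` vanishes on simplices of other lengths. -/
def MCup (M : GMS X) {j k : ℕ} {ℓ m : ℝ≥0} (φ : MCo M j ℓ) (ψ : MCo M k m) :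
    MCo M (j + k) (ℓ + m) :=
  fun s =>
    if h : M.len (frontT j k s.pts) = (ℓ : ℝ≥0∞) ∧ M.len (backT j k s.pts) = (m : ℝ≥0∞) then
      φ ⟨frontT j k s.pts, s.sep.front, h.1⟩ * ψ ⟨backT j k s.pts, s.sep.back, h.2⟩
    else 0

/-- The unit cochain `u ∈ MC^0_0`, with `u(x_0) = 1`. -/
def MCoUnit (M : GMS X) : MCo M 0 0 := fun _ => 1

/-- Transport of magnitude cohomology classes along equalities of bidegrees. -/
def MHcast (M : GMS X) {k k' : ℕ} {ℓ ℓ' : ℝ≥0} (hk : k = k') (hl : ℓ = ℓ')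
    (α : MagCohomology M k ℓ) : MagCohomology M k' ℓ' := hk ▸ hl ▸ α

/-- Transport of magnitude cochains along equalities of bidegrees. -/
def MCoCast (M : GMS X) {k k' : ℕ} {ℓ ℓ' : ℝ≥0} (hk : k = k') (hl : ℓ = ℓ')
    (φ : MCo M k ℓ) : MCo M k' ℓ' := hk ▸ hl ▸ φ

/-- The product on magnitude cohomology induced by the product of cochains. -/
def MHmul (M : GMS X) {j k : ℕ} {ℓ m : ℝ≥0} (α : MagCohomology M j ℓ)
    (β : MagCohomology M k m) : MagCohomology M (j + k) (ℓ + m) :=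
  cohClass M (MCup M (MHout M α) (MHout M β))

/-- The unit of the magnitude cohomology ring. -/
def MHone (M : GMS X) : MagCohomology M 0 0 := cohClass M (MCoUnit M)

/-- Two points are adjacent: their distance is nonzero and finite, and no
third point lies strictly between them. -/
def GMS.Adjacent (M : GMS X) (x y : X) : Prop :=
  M.d x y ≠ 0 ∧ M.d x y ≠ ∞ ∧ ∀ a, M.d x y = M.d x a + M.d a y → a = x ∨ a = y

/-- An isomorphism of magnitude cohomology rings: a family of additive
isomorphisms respecting both gradings, the product, and the unit. -/
def MHRingIso {Y : Type*} (M : GMS X) (M' : GMS Y) : Prop :=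
  ∃ e : ∀ (k : ℕ) (ℓ : ℝ≥0), MagCohomology M k ℓ ≃+ MagCohomology M' k ℓ,
    (e 0 0 (MHone M) = MHone M') ∧
    ∀ (j k : ℕ) (ℓ m : ℝ≥0) (α : MagCohomology M j ℓ) (β : MagCohomology M k m),
      e (j + k) (ℓ + m) (MHmul M α β) = MHmul M' (e j ℓ α) (e k m β)


/-- An idempotent of the ring `MH^0_0(X)`. -/
def MHIdem (M : GMS X) (e : MagCohomology M 0 0) : Prop :=
  MHmul M e e = MHcast M (by norm_num) (by norm_num) e

/-- A primitive idempotent of the ring `MH^0_0(X)`: a nonzero idempotent that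
is not the sum of two nonzero orthogonal idempotents. -/
def MHPrimIdem (M : GMS X) (e : MagCohomology M 0 0) : Prop :=
  e ≠ 0 ∧ MHIdem M e ∧
    ¬ ∃ e₁ e₂ : MagCohomology M 0 0, e₁ ≠ 0 ∧ e₂ ≠ 0 ∧ MHIdem M e₁ ∧ MHIdem M e₂ ∧
      MHmul M e₁ e₂ = 0 ∧ MHmul M e₂ e₁ = 0 ∧ e = e₁ + e₂

/-- The class `ε_x ∈ MH^0_0(X)` of the cochain `δ_x`. -/
def eps (M : GMS X) (x : X) : MagCohomology M 0 0 :=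
  cohClass M (fun s : MSimplex M 0 0 => if s.pts 0 = x then 1 else 0)

/-! Nothing maps into degrees 0 and 1 of the magnitude cochain complex (the coboundary out of
degree 0 is an empty sum), so `MH^0_0(X)` is the ring `ℤ^X` of all functions on the points of `X`,
with `ε_x` the indicator of `x`, and `MH^1_ℓ(X)` is the group of 1-cocycles. The primitive
idempotents of `ℤ^X` are exactly the indicators of single points. A 1-cochain is a cocycle exactly
when it vanishes on every 1-simplex `(a, b)` with a third point `c` satisfying
`d(a,b) = d(a,c) + d(c,b)`; and `ε_x · φ · ε_y` is the restriction of `φ` to the simplex `(x, y)`.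
Hence it is nonzero for some cocycle `φ` exactly when `(x, y)` is a 1-simplex of length `ℓ` with no
point strictly between `x` and `y`, i.e. when `x, y` are adjacent at distance `ℓ`. -/

def IsPrimitiveIdempotent {R : Type*} [Ring R] (e : R) : Prop :=
  e ≠ 0 ∧ IsIdempotentElem e ∧
    ¬ ∃ e₁ e₂ : R, e₁ ≠ 0 ∧ e₂ ≠ 0 ∧ IsIdempotentElem e₁ ∧ IsIdempotentElem e₂ ∧
      e₁ * e₂ = 0 ∧ e₂ * e₁ = 0 ∧ e = e₁ + e₂

section PiDomain

variable {ι R : Type*} [Ring R] [IsDomain R]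

theorem Pi.isIdempotentElem_iff_forall {f : ι → R} :
    IsIdempotentElem f ↔ ∀ i, f i = 0 ∨ f i = 1 := by
  simp only [IsIdempotentElem, funext_iff, Pi.mul_apply, ← IsIdempotentElem.iff_eq_zero_or_one]

variable [DecidableEq ι]

theorem Pi.isIdempotentElem_single_one (i : ι) : IsIdempotentElem (Pi.single i 1 : ι → R) :=
  Pi.isIdempotentElem_iff_forall.2 fun j => by by_cases hj : j = i <;> simp [hj]

theorem Pi.isPrimitiveIdempotent_iff (f : ι → R) :
    IsPrimitiveIdempotent f ↔ ∃ i, f = Pi.single i 1 := by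
  constructor
  · rintro ⟨hf, hidem, hsplit⟩
    have hval := Pi.isIdempotentElem_iff_forall.1 hidem
    obtain ⟨i, hi⟩ := Function.ne_iff.1 hf
    have hi1 : f i = 1 := (hval i).resolve_left hi
    refine ⟨i, by_contra fun hfi => hsplit ⟨Pi.single i 1, f - Pi.single i 1,
      Pi.single_ne_zero_iff.2 one_ne_zero, sub_ne_zero.2 hfi, Pi.isIdempotentElem_single_one i,
      Pi.isIdempotentElem_iff_forall.2 fun j => ?_, ?_, ?_, (add_sub_cancel _ _).symm⟩⟩
    all_goals
      try ext j
      by_cases hj : j = i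
      · subst hj; simp [hi1]
      · simp [hj, hval j]
  · rintro ⟨i, rfl⟩
    refine ⟨Pi.single_ne_zero_iff.2 one_ne_zero, Pi.isIdempotentElem_single_one i, ?_⟩
    rintro ⟨e₁, e₂, h₁, h₂, -, -, h₁₂, -, hsum⟩
    have hzero : ∀ j, e₁ j = 0 ∨ e₂ j = 0 := fun j => mul_eq_zero.1 (congrFun h₁₂ j)
    have hoff : ∀ j, j ≠ i → e₁ j = 0 ∧ e₂ j = 0 := fun j hj => by
      have hsumj := congrFun hsum j
      rw [Pi.single_eq_of_ne hj, Pi.add_apply] at hsumj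
      rcases hzero j with h | h
      · exact ⟨h, by simpa [h] using hsumj.symm⟩
      · exact ⟨by simpa [h] using hsumj.symm, h⟩
    rcases hzero i with h | h
    · exact h₁ (funext fun j => if hj : j = i then hj ▸ h else (hoff j hj).1)
    · exact h₂ (funext fun j => if hj : j = i then hj ▸ h else (hoff j hj).2)

end PiDomain

namespace MSimplex

variable {M : GMS X} {k : ℕ} {ℓ ℓ' : ℝ≥0}

@[ext] theorem ext {s t : MSimplex M k ℓ} (h : s.pts = t.pts) : s = t := by
  cases s; cases t; cases h; rfl

def castLen (h : ℓ = ℓ') (s : MSimplex M k ℓ) : MSimplex M k ℓ' :=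
  ⟨s.pts, s.sep, h ▸ s.len_eq⟩

theorem castLen_surjective (h : ℓ = ℓ') : Function.Surjective (castLen (M := M) (k := k) h) :=
  fun s => ⟨s.castLen h.symm, rfl⟩

def castDeg {k' : ℕ} (h : k = k') (s : MSimplex M k ℓ) : MSimplex M k' ℓ :=
  h ▸ s

theorem castDeg_pts {k' : ℕ} (h : k = k') (s : MSimplex M k ℓ) :
    (s.castDeg h).pts = s.pts ∘ Fin.cast (by rw [h]) := by
  subst h
  rfl

variable (M) in
def point (x : X) : MSimplex M 0 0 :=
  ⟨fun _ => x, fun i => i.elim0, by simp [GMS.len]⟩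

theorem eq_point_iff {s : MSimplex M 0 0} {x : X} : s = point M x ↔ s.pts 0 = x := by
  refine ⟨fun h => h ▸ rfl, fun h => ext (funext fun i => ?_)⟩
  rw [Fin.eq_zero i, h]
  rfl

end MSimplex

theorem GMS.len_two (M : GMS X) (p : Fin 2 → X) : M.len p = M.d (p 0) (p 1) := by
  simp [GMS.len]

theorem GMS.len_three (M : GMS X) (p : Fin 3 → X) :
    M.len p = M.d (p 0) (p 1) + M.d (p 1) (p 2) := by
  simp [GMS.len, Fin.sum_univ_two]

section Cohomology

variable (M : GMS X) {k : ℕ} {ℓ : ℝ≥0}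

theorem MCoDelta_zero (ℓ : ℝ≥0) : MCoDelta M 0 ℓ = 0 := by
  ext φ s
  simp [MCoDelta]

theorem mem_MCocycle_zero (φ : MCo M 0 ℓ) : φ ∈ MCocycle M 0 ℓ := by
  simp [MCocycle, MCoDelta_zero]

theorem MCobound_zero : MCobound M 0 ℓ = ⊥ := rfl

theorem MCobound_one : MCobound M 1 ℓ = ⊥ := by
  simp [MCobound, MCoDelta_zero]

theorem cohClass_of_mem {φ : MCo M k ℓ} (h : φ ∈ MCocycle M k ℓ) :
    cohClass M φ = Submodule.Quotient.mk ⟨φ, h⟩ :=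
  dif_pos h

theorem MHout_mem (α : MagCohomology M k ℓ) : MHout M α ∈ MCocycle M k ℓ :=
  ((Submodule.Quotient.mk_surjective _) α).choose.2

theorem cohClass_MHout (α : MagCohomology M k ℓ) : cohClass M (MHout M α) = α := by
  rw [cohClass_of_mem M (MHout_mem M α)]
  exact ((Submodule.Quotient.mk_surjective _) α).choose_spec

theorem cohClass_add {φ ψ : MCo M k ℓ} (hφ : φ ∈ MCocycle M k ℓ) (hψ : ψ ∈ MCocycle M k ℓ) :
    cohClass M (φ + ψ) = cohClass M φ + cohClass M ψ := by
  rw [cohClass_of_mem M hφ, cohClass_of_mem M hψ, cohClass_of_mem M (add_mem hφ hψ),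
    ← Submodule.Quotient.mk_add]
  rfl

theorem MHcast_cohClass {ℓ' : ℝ≥0} (hk : k = k) (hl : ℓ = ℓ') (φ : MCo M k ℓ) :
    MHcast M hk hl (cohClass M φ) = cohClass M (φ ∘ MSimplex.castLen hl.symm) := by
  subst hl
  rfl

variable {M}

theorem cohClass_inj (hbot : MCobound M k ℓ = ⊥) {φ ψ : MCo M k ℓ} (hφ : φ ∈ MCocycle M k ℓ)
    (hψ : ψ ∈ MCocycle M k ℓ) : cohClass M φ = cohClass M ψ ↔ φ = ψ := by
  rw [cohClass_of_mem M hφ, cohClass_of_mem M hψ, Submodule.Quotient.eq, hbot,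
    Submodule.comap_bot, Submodule.ker_subtype, Submodule.mem_bot, sub_eq_zero, Subtype.ext_iff]

theorem cohClass_eq_zero_iff (hbot : MCobound M k ℓ = ⊥) {φ : MCo M k ℓ}
    (hφ : φ ∈ MCocycle M k ℓ) : cohClass M φ = 0 ↔ φ = 0 := by
  rw [← cohClass_inj hbot hφ (zero_mem _), cohClass_of_mem M (zero_mem _)]
  rfl

theorem MHout_cohClass (hbot : MCobound M k ℓ = ⊥) {φ : MCo M k ℓ} (hφ : φ ∈ MCocycle M k ℓ) :
    MHout M (cohClass M φ) = φ :=
  (cohClass_inj hbot (MHout_mem M _) hφ).1 (cohClass_MHout M _)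

theorem MHout_add (hbot : MCobound M k ℓ = ⊥) (α β : MagCohomology M k ℓ) :
    MHout M (α + β) = MHout M α + MHout M β := by
  rw [← cohClass_inj hbot (MHout_mem M _) (add_mem (MHout_mem M α) (MHout_mem M β)),
    cohClass_add M (MHout_mem M α) (MHout_mem M β), cohClass_MHout, cohClass_MHout,
    cohClass_MHout]

end Cohomology

section DegreeZero

variable (M : GMS X)

def magCohomologyZeroEquiv (ℓ : ℝ≥0) : MagCohomology M 0 ℓ ≃+ MCo M 0 ℓ where
  toFun := MHout M
  invFun := cohClass M
  left_inv := cohClass_MHout M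
  right_inv φ := MHout_cohClass (MCobound_zero M) (mem_MCocycle_zero M φ)
  map_add' := MHout_add (MCobound_zero M)

def deltaCochain (x : X) : MCo M 0 0 := fun s => if s.pts 0 = x then 1 else 0

theorem deltaCochain_eq_single (x : X) :
    deltaCochain M x = Pi.single (MSimplex.point M x) 1 := by
  ext s
  simp [deltaCochain, Pi.single_apply, MSimplex.eq_point_iff]

theorem MHout_eps (x : X) : MHout M (eps M x) = deltaCochain M x :=
  MHout_cohClass (MCobound_zero M) (mem_MCocycle_zero M _)

theorem MCup_zero_zero (f g : MCo M 0 0) :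
    MCup M f g = (f * g) ∘ MSimplex.castLen (zero_add 0) := by
  ext s
  have hlen : ∀ p : Fin 1 → X, M.len p = ((0 : ℝ≥0) : ℝ≥0∞) := fun p => by simp [GMS.len]
  rw [MCup, dif_pos ⟨hlen _, hlen _⟩]
  congr 2
  ext i
  simp [backT, MSimplex.castLen, Fin.eq_zero i]

theorem MHmul_zero_zero (α β : MagCohomology M 0 0) :
    MHmul M α β = cohClass M ((MHout M α * MHout M β) ∘ MSimplex.castLen (zero_add 0)) := by
  rw [MHmul, MCup_zero_zero]

theorem MHIdem_iff (e : MagCohomology M 0 0) : MHIdem M e ↔ IsIdempotentElem (MHout M e) := by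
  rw [MHIdem, MHmul_zero_zero]
  conv_lhs => rhs; rw [← cohClass_MHout M e]
  rw [MHcast_cohClass, cohClass_inj (MCobound_zero M) (mem_MCocycle_zero M _)
    (mem_MCocycle_zero M _)]
  exact (MSimplex.castLen_surjective _).injective_comp_right.eq_iff

theorem MHmul_eq_zero_iff (α β : MagCohomology M 0 0) :
    MHmul M α β = 0 ↔ MHout M α * MHout M β = 0 := by
  rw [MHmul_zero_zero, cohClass_eq_zero_iff (MCobound_zero M) (mem_MCocycle_zero M _)]
  exact (MSimplex.castLen_surjective _).injective_comp_right.eq_iff' rfl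

theorem MHPrimIdem_iff (e : MagCohomology M 0 0) :
    MHPrimIdem M e ↔ IsPrimitiveIdempotent (MHout M e) := by
  let E := magCohomologyZeroEquiv M 0
  have hE : ∀ α, MHout M α = E α := fun _ => rfl
  simp only [MHPrimIdem, IsPrimitiveIdempotent, MHIdem_iff, MHmul_eq_zero_iff, hE,
    E.surjective.exists, ← map_add, E.injective.eq_iff, map_ne_zero_iff _ E.injective]

theorem MHPrimIdem_iff_exists_eps (e : MagCohomology M 0 0) :
    MHPrimIdem M e ↔ ∃ x, eps M x = e := by
  rw [MHPrimIdem_iff, Pi.isPrimitiveIdempotent_iff]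
  constructor
  · rintro ⟨s, hs⟩
    refine ⟨s.pts 0, (magCohomologyZeroEquiv M 0).injective ?_⟩
    change MHout M _ = MHout M _
    rw [MHout_eps, hs, deltaCochain_eq_single, ← MSimplex.eq_point_iff.2 rfl]
  · rintro ⟨x, rfl⟩
    exact ⟨MSimplex.point M x, by rw [MHout_eps, deltaCochain_eq_single]⟩

theorem eps_injective : Function.Injective (eps M) := by
  intro x y h
  have := congrFun (congrArg (MHout M) h) (MSimplex.point M x)
  simpa [MHout_eps, deltaCochain, MSimplex.point] using this

end DegreeZero

section DegreeOne

variable {M : GMS X} {ℓ : ℝ≥0}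

def GMS.Between (M : GMS X) (x a y : X) : Prop :=
  a ≠ x ∧ a ≠ y ∧ M.d x y = M.d x a + M.d a y

theorem MCoDelta_one_apply (φ : MCo M 1 ℓ) (u : MSimplex M 2 ℓ) :
    MCoDelta M 1 ℓ φ u = -(if h : M.FaceOK u 0 then φ (M.face u 0 h) else 0) := by
  simp [MCoDelta, apply_dite Neg.neg]

theorem mem_MCocycle_one_iff (φ : MCo M 1 ℓ) :
    φ ∈ MCocycle M 1 ℓ ↔ ∀ s : MSimplex M 1 ℓ, ∀ a, M.Between (s.pts 0) a (s.pts 1) → φ s = 0 := by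
  simp only [MCocycle, LinearMap.mem_ker, funext_iff, MCoDelta_one_apply, Pi.zero_apply,
    neg_eq_zero, dite_eq_right_iff]
  constructor
  · rintro H s a ⟨hax, hay, hgeo⟩
    have hlen : M.len ![s.pts 0, a, s.pts 1] = ℓ := by
      rw [GMS.len_three, ← s.len_eq, GMS.len_two]
      exact hgeo.symm
    let u : MSimplex M 2 ℓ := ⟨![s.pts 0, a, s.pts 1], fun i => by
      fin_cases i
      exacts [hax.symm, hay], hlen⟩
    have hface : M.FaceOK u 0 := ⟨hgeo, fun i => by
      rw [Fin.eq_zero i]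
      exact s.sep 0, by rw [← s.len_eq, GMS.len_two, GMS.len_two]; rfl⟩
    have hus : M.face u 0 hface = s := by
      ext i
      fin_cases i <;> rfl
    rw [← hus]
    exact H u hface
  · intro H u hu
    exact H _ (u.pts 1) ⟨(u.sep 0).symm, u.sep 1, hu.1⟩

end DegreeOne

section Cup

variable {M : GMS X} {j k : ℕ} {ℓ m : ℝ≥0}

theorem MCup_deltaCochain_left (x : X) (ψ : MCo M k m) (s : MSimplex M (0 + k) (0 + m)) :
    MCup M (deltaCochain M x) ψ s =
      if s.pts 0 = x then ψ ((s.castDeg (zero_add k)).castLen (zero_add m)) else 0 := by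
  have hback : backT 0 k s.pts = ((s.castDeg (zero_add k)).castLen (zero_add m)).pts := by
    ext i
    simp only [backT, MSimplex.castLen, MSimplex.castDeg_pts, Function.comp_apply, zero_add]
    rfl
  have hlen : M.len (backT 0 k s.pts) = m := by
    rw [hback]
    exact MSimplex.len_eq _
  rw [MCup, dif_pos ⟨by simp [GMS.len], hlen⟩]
  simp only [deltaCochain, ite_mul, one_mul, zero_mul]
  congr 2
  exact MSimplex.ext hback

theorem MCup_deltaCochain_right (φ : MCo M j ℓ) (y : X) (s : MSimplex M (j + 0) (ℓ + 0)) :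
    MCup M φ (deltaCochain M y) s =
      if s.pts (Fin.last j) = y then φ (s.castLen (add_zero ℓ)) else 0 := by
  have hlen : M.len (frontT j 0 s.pts) = ℓ := (s.castLen (add_zero ℓ)).len_eq
  rw [MCup, dif_pos ⟨hlen, by simp [GMS.len]⟩]
  simp only [deltaCochain, mul_ite, mul_one, mul_zero]
  rfl

end Cup

def cornerCochain {M : GMS X} {k : ℕ} {ℓ : ℝ≥0} (x y : X) (φ : MCo M k ℓ) : MCo M k ℓ :=
  fun s => if s.pts 0 = x ∧ s.pts (Fin.last k) = y then φ s else 0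

section Corner

variable {M : GMS X} {ℓ : ℝ≥0}

theorem cornerCochain_mem_MCocycle_one (x y : X) {φ : MCo M 1 ℓ} (hφ : φ ∈ MCocycle M 1 ℓ) :
    cornerCochain x y φ ∈ MCocycle M 1 ℓ := by
  refine (mem_MCocycle_one_iff _).2 fun s a hs => ?_
  simp [cornerCochain, (mem_MCocycle_one_iff φ).1 hφ s a hs]

theorem MCup_deltaCochain_mem_MCocycle_one (y : X) {φ : MCo M 1 ℓ} (hφ : φ ∈ MCocycle M 1 ℓ) :
    MCup M φ (deltaCochain M y) ∈ MCocycle M (1 + 0) (ℓ + 0) := by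
  refine (mem_MCocycle_one_iff _).2 fun s a hs => ?_
  simp [MCup_deltaCochain_right, (mem_MCocycle_one_iff φ).1 hφ (s.castLen (add_zero ℓ)) a hs]

theorem MHcast_eps_mul_mul_eps (x y : X) (α : MagCohomology M 1 ℓ) (hk : 0 + (1 + 0) = 1)
    (hl : 0 + (ℓ + 0) = ℓ) :
    MHcast M hk hl (MHmul M (eps M x) (MHmul M α (eps M y))) =
      cohClass M (cornerCochain x y (MHout M α)) := by
  have hright : MHout M (MHmul M α (eps M y)) = MCup M (MHout M α) (deltaCochain M y) := by
    rw [MHmul, MHout_eps]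
    exact MHout_cohClass (MCobound_one M)
      (MCup_deltaCochain_mem_MCocycle_one y (MHout_mem M α))
  rw [MHmul, MHout_eps, hright, MHcast_cohClass]
  congr 1
  ext s
  simp only [Function.comp_apply, MCup_deltaCochain_left, MCup_deltaCochain_right, cornerCochain,
    ite_and]
  -- the remaining casts are along definitional equalities of indices
  rfl

theorem exists_cornerCochain_ne_zero_iff (x y : X) (hℓ : 0 < ℓ) :
    (∃ φ ∈ MCocycle M 1 ℓ, cornerCochain x y φ ≠ 0) ↔ M.Adjacent x y ∧ M.d x y = ℓ := by
  constructor
  · rintro ⟨φ, hφ, hne⟩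
    obtain ⟨s, hs⟩ := Function.ne_iff.1 hne
    simp only [cornerCochain, Pi.zero_apply, ne_eq, ite_eq_right_iff, Classical.not_imp] at hs
    obtain ⟨⟨rfl, rfl⟩, hφs⟩ := hs
    have hd : M.d (s.pts 0) (s.pts 1) = ℓ := (M.len_two _).symm.trans s.len_eq
    refine ⟨⟨by simpa [hd] using hℓ.ne', by simp [hd], fun a ha => ?_⟩, hd⟩
    by_contra! hax
    exact hφs ((mem_MCocycle_one_iff φ).1 hφ s a ⟨hax.1, hax.2, ha⟩)
  · rintro ⟨⟨hd0, -, hadj⟩, hd⟩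
    have hxy : x ≠ y := fun h => hd0 (h ▸ M.d_self x)
    let σ : MSimplex M 1 ℓ :=
      ⟨![x, y], fun i => by rw [Fin.eq_zero i]; exact hxy, by rw [M.len_two]; exact hd⟩
    refine ⟨Pi.single σ 1, (mem_MCocycle_one_iff _).2 fun s a hs => ?_, Function.ne_iff.2 ⟨σ, ?_⟩⟩
    · rw [Pi.single_apply, if_neg]
      rintro rfl
      rcases hadj a hs.2.2 with h | h
      exacts [hs.1 h, hs.2.1 h]
    · simp [cornerCochain, σ]

end Corner

/-- For an extended quasi-metric space `X`, the map `x ↦ ε_x` is a bijection of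
`X` onto the primitive idempotents of `MH^0_0(X)`; and for `ℓ ∈ (0,∞)`,
`ε_x · MH^1_ℓ(X) · ε_y ≠ 0` iff `x` and `y` are adjacent with `d(x,y) = ℓ`. -/
theorem primitive_idempotents (M : GMS X) :
    (∀ x : X, MHPrimIdem M (eps M x)) ∧
    Function.Injective (eps M) ∧
    (∀ e : MagCohomology M 0 0, MHPrimIdem M e → ∃ x : X, eps M x = e) ∧
    (∀ (x y : X) (ℓ : ℝ≥0), 0 < ℓ →
      ((∃ α : MagCohomology M 1 ℓ,
          MHcast M (by norm_num) (by norm_num)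
            (MHmul M (eps M x) (MHmul M α (eps M y))) ≠ (0 : MagCohomology M 1 ℓ)) ↔
        (M.Adjacent x y ∧ M.d x y = (ℓ : ℝ≥0∞)))) := by
  refine ⟨fun x => (MHPrimIdem_iff_exists_eps M _).2 ⟨x, rfl⟩, eps_injective M,
    fun e he => (MHPrimIdem_iff_exists_eps M e).1 he, fun x y ℓ hℓ => ?_⟩
  rw [← exists_cornerCochain_ne_zero_iff x y hℓ]
  simp only [MHcast_eps_mul_mul_eps]
  constructor
  · rintro ⟨α, hα⟩
    have hcorner := cornerCochain_mem_MCocycle_one x y (MHout_mem M α)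
    exact ⟨MHout M α, MHout_mem M α, mt (cohClass_eq_zero_iff (MCobound_one M) hcorner).2 hα⟩
  · rintro ⟨φ, hφ, hne⟩
    refine ⟨cohClass M φ, ?_⟩
    rw [MHout_cohClass (MCobound_one M) hφ]
    exact mt (cohClass_eq_zero_iff (MCobound_one M) (cornerCochain_mem_MCocycle_one x y hφ)).1 hne
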